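/- Let (μ, p) be an allocation of an assignment game that lies in the κ-approximate core for some κ ∈ [0,1]. Then SI(μ, p) ≤ (1 − κ)·OPT; equivalently, when OPT > 0, κ ≤ J(μ, p). -/

import Mathlib

/-!
In the κ-approximate core every pair `(i, j)` already receives `u i + v j ≥ κ · a(i,j)`.
Summing this over the pairs of any matching `μ'` inside a sub-market `(B', S')`, and using
nonnegativity of the utilities for the agents of `B' ∪ S'` that `μ'` leaves out, the
coalition `(B', S')` receives at least `κ · SW(μ')`. Its deviation gain is therefore at most
`(1 - κ) · SW(μ') ≤ (1 - κ) · OPT`.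
-/

open Finset

/-- A matching: a partial, injective assignment of buyers to sellers. -/
structure Matching (B S : Type*) where
  toFun : B → Option S
  inj : ∀ i i' j, toFun i = some j → toFun i' = some j → i = i'

variable {B S : Type*} [Fintype B] [Fintype S]

/-- Generated utility of a pair: `a i j = h i j - c j`. -/
def gain (h : B → S → ℝ) (c : S → ℝ) (i : B) (j : S) : ℝ := h i j - c j

/-- Social welfare of a matching. -/
def SW (h : B → S → ℝ) (c : S → ℝ) (μ : Matching B S) : ℝ :=
  ∑ i : B, ((μ.toFun i).elim 0 (fun j => gain h c i j))

/-- Buyer utility under an allocation. -/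
def buyerU (h : B → S → ℝ) (μ : Matching B S) (p : S → ℝ) (i : B) : ℝ :=
  (μ.toFun i).elim 0 (fun j => h i j - p j)

/-- Seller utility under an allocation. -/
def sellerU (c : S → ℝ) (p : S → ℝ) (j : S) : ℝ := p j - c j

/-- A seller is matched under `μ`. -/
def SellerMatched (μ : Matching B S) (j : S) : Prop := ∃ i, μ.toFun i = some j

/-- A valid price vector: nonnegative, and equal to the seller's valuation on
unmatched sellers. -/
def ValidPrices (c : S → ℝ) (μ : Matching B S) (p : S → ℝ) : Prop :=
  (∀ j, 0 ≤ p j) ∧ (∀ j, ¬ SellerMatched μ j → p j = c j)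

/-- Individual rationality of an allocation. -/
def IndivRational (h : B → S → ℝ) (c : S → ℝ) (μ : Matching B S) (p : S → ℝ) : Prop :=
  (∀ i, 0 ≤ buyerU h μ p i) ∧ (∀ j, 0 ≤ sellerU c p j)

/-- Stability of an allocation. -/
def Stable (h : B → S → ℝ) (c : S → ℝ) (μ : Matching B S) (p : S → ℝ) : Prop :=
  IndivRational h c μ p ∧ ∀ i j, gain h c i j ≤ buyerU h μ p i + sellerU c p j

/-- The optimal (maximum) social welfare over all matchings. -/
noncomputable def OPT (h : B → S → ℝ) (c : S → ℝ) : ℝ :=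
  sSup (Set.range (SW h c))

/-- `μ'` is a matching within the sub-market `(B', S')`. -/
def Within (B' : Finset B) (S' : Finset S) (μ' : Matching B S) : Prop :=
  ∀ i j, μ'.toFun i = some j → i ∈ B' ∧ j ∈ S'

/-- Subset instability of a pair of utility vectors `(u, v)`. -/
noncomputable def SIgen (h : B → S → ℝ) (c : S → ℝ) (u : B → ℝ) (v : S → ℝ) : ℝ :=
  sSup {x | ∃ (B' : Finset B) (S' : Finset S) (μ' : Matching B S),
    Within B' S' μ' ∧ x = SW h c μ' - ((∑ i ∈ B', u i) + (∑ j ∈ S', v j))}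

/-- Subset instability of an allocation. -/
noncomputable def SI (h : B → S → ℝ) (c : S → ℝ) (μ : Matching B S) (p : S → ℝ) : ℝ :=
  SIgen h c (buyerU h μ p) (sellerU c p)

/-- Membership in the κ-approximate core. -/
def ApproxCore (h : B → S → ℝ) (c : S → ℝ) (μ : Matching B S) (p : S → ℝ) (κ : ℝ) : Prop :=
  (∀ i, 0 ≤ buyerU h μ p i) ∧ (∀ j, 0 ≤ sellerU c p j) ∧
  ∀ i j, κ * gain h c i j ≤ buyerU h μ p i + sellerU c p j

theorem Finset.sum_filterMap {α β M : Type*} [AddCommMonoid M] (s : Finset α)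
    (f : α → Option β) (hf : ∀ a a' b, b ∈ f a → b ∈ f a' → a = a') (w : β → M) :
    ∑ b ∈ s.filterMap f hf, w b = ∑ a ∈ s, (f a).elim 0 w := by
  simp only [Finset.sum, Finset.filterMap_val]
  induction s.val using Multiset.induction_on with
  | empty => simp
  | cons a t ih => cases hfa : f a <;> simp [hfa, ih]

namespace Matching

variable {B S : Type*}

theorem toFun_injective : Function.Injective (toFun : Matching B S → B → Option S) := by
  rintro ⟨f, _⟩ ⟨g, _⟩ rfl
  rfl

instance [Finite B] [Finite S] : Finite (Matching B S) :=
  Finite.of_injective _ toFun_injective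

def empty : Matching B S :=
  ⟨fun _ => none, fun _ _ _ h => nomatch h⟩

def partners (μ : Matching B S) (B' : Finset B) : Finset S :=
  B'.filterMap μ.toFun μ.inj

theorem sum_partners {M : Type*} [AddCommMonoid M] (μ : Matching B S) (B' : Finset B)
    (w : S → M) : ∑ j ∈ μ.partners B', w j = ∑ i ∈ B', (μ.toFun i).elim 0 w :=
  Finset.sum_filterMap B' μ.toFun μ.inj w

theorem partners_subset_of_within {μ : Matching B S} {B' : Finset B} {S' : Finset S}
    (hW : Within B' S' μ) : μ.partners B' ⊆ S' := by
  intro j hj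
  obtain ⟨i, -, hij⟩ := (Finset.mem_filterMap _).mp hj
  exact (hW i j hij).2

end Matching

section Welfare

variable {B S : Type*} [Fintype B] (h : B → S → ℝ) (c : S → ℝ)

theorem SW_empty : SW h c Matching.empty = 0 := by
  simp [SW, Matching.empty]

theorem SW_le_OPT [Finite S] (μ : Matching B S) : SW h c μ ≤ OPT h c :=
  le_csSup (Set.finite_range _).bddAbove ⟨μ, rfl⟩

theorem OPT_nonneg [Finite S] : 0 ≤ OPT h c :=
  SW_empty h c ▸ SW_le_OPT h c Matching.empty

theorem SW_eq_sum_of_within {μ : Matching B S} {B' : Finset B} {S' : Finset S}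
    (hW : Within B' S' μ) : SW h c μ = ∑ i ∈ B', (μ.toFun i).elim 0 (gain h c i) := by
  refine (Finset.sum_subset (Finset.subset_univ B') fun i _ hi => ?_).symm
  cases hμi : μ.toFun i with
  | none => rfl
  | some j => exact absurd (hW i j hμi).1 hi

theorem mul_SW_le_sum_add_sum {u : B → ℝ} {v : S → ℝ} (hu : ∀ i, 0 ≤ u i) (hv : ∀ j, 0 ≤ v j)
    {κ : ℝ} (hκ : ∀ i j, κ * gain h c i j ≤ u i + v j)
    {μ : Matching B S} {B' : Finset B} {S' : Finset S} (hW : Within B' S' μ) :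
    κ * SW h c μ ≤ ∑ i ∈ B', u i + ∑ j ∈ S', v j := by
  have pointwise : ∀ i, κ * (μ.toFun i).elim 0 (gain h c i) ≤ u i + (μ.toFun i).elim 0 v := by
    intro i
    cases μ.toFun i with
    | none => simpa using hu i
    | some j => exact hκ i j
  calc κ * SW h c μ
      = ∑ i ∈ B', κ * (μ.toFun i).elim 0 (gain h c i) := by
        rw [SW_eq_sum_of_within h c hW, Finset.mul_sum]
    _ ≤ ∑ i ∈ B', (u i + (μ.toFun i).elim 0 v) := Finset.sum_le_sum fun i _ => pointwise i
    _ = ∑ i ∈ B', u i + ∑ j ∈ μ.partners B', v j := by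
        rw [Finset.sum_add_distrib, Matching.sum_partners]
    _ ≤ ∑ i ∈ B', u i + ∑ j ∈ S', v j := by
        gcongr
        · exact fun j _ _ => hv j
        · exact Matching.partners_subset_of_within hW

theorem SIgen_le_of_mul_gain_le [Finite S] {u : B → ℝ} {v : S → ℝ} (hu : ∀ i, 0 ≤ u i)
    (hv : ∀ j, 0 ≤ v j) {κ : ℝ} (hκ1 : κ ≤ 1) (hκ : ∀ i j, κ * gain h c i j ≤ u i + v j) :
    SIgen h c u v ≤ (1 - κ) * OPT h c := by
  refine Real.sSup_le ?_ (mul_nonneg (sub_nonneg.mpr hκ1) (OPT_nonneg h c))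
  rintro x ⟨B', S', μ', hW, rfl⟩
  have hκSW := mul_SW_le_sum_add_sum h c hu hv hκ hW
  have hSW := mul_le_mul_of_nonneg_left (SW_le_OPT h c μ') (sub_nonneg.mpr hκ1)
  linarith

end Welfare

theorem approxCore_SI_bound_general
    {B S : Type*} [Fintype B] [Fintype S]
    (h : B → S → ℝ) (c : S → ℝ)
    (μ : Matching B S) (p : S → ℝ)
    (κ : ℝ) (hκ1 : κ ≤ 1)
    (hcore : ApproxCore h c μ p κ) :
    SI h c μ p ≤ (1 - κ) * OPT h c ∧
      (0 < OPT h c → κ ≤ 1 - SI h c μ p / OPT h c) := by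
  obtain ⟨hu, hv, hκ⟩ := hcore
  have hSI : SI h c μ p ≤ (1 - κ) * OPT h c := SIgen_le_of_mul_gain_le h c hu hv hκ1 hκ
  refine ⟨hSI, fun hOPT => ?_⟩
  have : SI h c μ p / OPT h c ≤ 1 - κ := (div_le_iff₀ hOPT).mpr hSI
  linarith

/-- An allocation in the κ-approximate core has subset instability at most
`(1 - κ) · OPT`; equivalently, its stability index is at least κ. -/
theorem approxCore_SI_bound
    {B S : Type*} [Fintype B] [Fintype S]
    (h : B → S → ℝ) (c : S → ℝ)
    (hh : ∀ i j, 0 ≤ h i j) (hc : ∀ j, 0 ≤ c j)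
    (ha : ∀ i j, 0 ≤ gain h c i j)
    (μ : Matching B S) (p : S → ℝ) (hp : ValidPrices c μ p)
    (κ : ℝ) (hκ0 : 0 ≤ κ) (hκ1 : κ ≤ 1)
    (hcore : ApproxCore h c μ p κ) :
    SI h c μ p ≤ (1 - κ) * OPT h c ∧
      (0 < OPT h c → κ ≤ 1 - SI h c μ p / OPT h c) :=
  approxCore_SI_bound_general h c μ p κ hκ1 hcore
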